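/- Any real-valued logic that is an extension of Gödel logic satisfies P1: if L = Taut(T,*) for some continuous t-norm * and algebra of truth values T, and Taut([0,1],min) ⊆ L, then L satisfies P1. -/

import Mathlib

open Set

noncomputable section

/-- The real unit interval `[0,1]` as a subset of `ℝ`. -/
def I01 : Set ℝ := Set.Icc 0 1

/-- A continuous t-norm on `[0,1]`. -/
structure ContTNorm where
  mul : ℝ → ℝ → ℝ
  maps_to : ∀ x ∈ I01, ∀ y ∈ I01, mul x y ∈ I01
  continuousOn : ContinuousOn (fun p : ℝ × ℝ => mul p.1 p.2) (I01 ×ˢ I01)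
  assoc : ∀ x ∈ I01, ∀ y ∈ I01, ∀ z ∈ I01, mul (mul x y) z = mul x (mul y z)
  comm : ∀ x ∈ I01, ∀ y ∈ I01, mul x y = mul y x
  mono : ∀ a ∈ I01, ∀ b ∈ I01, ∀ c ∈ I01, b ≤ c → mul a b ≤ mul a c
  one_mul' : ∀ x ∈ I01, mul 1 x = x

/-- The residuum of a t-norm: `x →* y := sup { c ∈ [0,1] | x * c ≤ y }`. -/
def resid (t : ContTNorm) (x y : ℝ) : ℝ :=
  sSup {c | c ∈ I01 ∧ t.mul x c ≤ y}

/-- An algebra of truth values for the t-norm `t`: a subset of `[0,1]` containing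
`0` and `1` and closed under `t.mul` and its residuum. -/
structure TruthAlg (t : ContTNorm) where
  carrier : Set ℝ
  subset : carrier ⊆ I01
  zero_mem : (0:ℝ) ∈ carrier
  one_mem : (1:ℝ) ∈ carrier
  mul_mem : ∀ x ∈ carrier, ∀ y ∈ carrier, t.mul x y ∈ carrier
  resid_mem : ∀ x ∈ carrier, ∀ y ∈ carrier, resid t x y ∈ carrier

/-- Propositional formulas over countably many variables with `&`, `→`, `⊥`. -/
inductive Formula : Type
  | var : ℕ → Formula
  | bot : Formula
  | conj : Formula → Formula → Formula
  | impl : Formula → Formula → Formula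

/-- `α ↔ β := (α → β) & (β → α)`. -/
def Formula.iff (a b : Formula) : Formula := .conj (.impl a b) (.impl b a)

/-- The valuation determined by an assignment `v` of reals to the variables. -/
def eval (t : ContTNorm) (v : ℕ → ℝ) : Formula → ℝ
  | .var i => v i
  | .bot => 0
  | .conj a b => t.mul (eval t v a) (eval t v b)
  | .impl a b => resid t (eval t v a) (eval t v b)

/-- A valuation into `(T, t)` is (identified with) an assignment of values of `T`
to the propositional variables. -/
def IsValuation (t : ContTNorm) (T : TruthAlg t) (v : ℕ → ℝ) : Prop :=
  ∀ i, v i ∈ T.carrier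

/-- The logic induced by `(T, t)`: all formulas true to degree 1 under every valuation. -/
def Taut (t : ContTNorm) (T : TruthAlg t) : Set Formula :=
  {α | ∀ v : ℕ → ℝ, IsValuation t T v → eval t v α = 1}

/-- Principle P1. -/
def P1 (L : Set Formula) : Prop :=
  ∀ (t : ContTNorm) (T : TruthAlg t), Taut t T = L →
    ∀ α β : Formula,
      (Formula.iff α β ∈ L ↔
        ∀ v : ℕ → ℝ, IsValuation t T v → (eval t v α = 1 ↔ eval t v β = 1))

/-- Principle P2. -/
def P2 (L : Set Formula) : Prop :=
  ∀ (t : ContTNorm) (T : TruthAlg t), Taut t T = L →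
    ∀ v w : ℕ → ℝ, IsValuation t T v → IsValuation t T w → v ≠ w →
      ∃ α : Formula, 0 < eval t v α ∧ eval t w α = 0

/-- The Gödel t-norm: minimum. -/
def minT : ContTNorm where
  mul := fun x y => min x y
  maps_to := by
    rintro x ⟨hx0, hx1⟩ y ⟨hy0, hy1⟩
    exact ⟨le_min hx0 hy0, min_le_of_left_le hx1⟩
  continuousOn := (continuous_fst.min continuous_snd).continuousOn
  assoc := fun x _ y _ z _ => min_assoc x y z
  comm := fun x _ y _ => min_comm x y
  mono := fun a _ b _ c _ h => min_le_min le_rfl h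
  one_mul' := by rintro x ⟨hx0, hx1⟩; exact min_eq_right hx1

/-- The Łukasiewicz t-norm: `x ⊙ y = max 0 (x + y - 1)`. -/
def lukT : ContTNorm where
  mul := fun x y => max 0 (x + y - 1)
  maps_to := by
    rintro x ⟨hx0, hx1⟩ y ⟨hy0, hy1⟩
    exact ⟨le_max_left _ _, max_le zero_le_one (by linarith)⟩
  continuousOn :=
    (continuous_const.max ((continuous_fst.add continuous_snd).sub continuous_const)).continuousOn
  assoc := by
    rintro x ⟨hx0, hx1⟩ y ⟨hy0, hy1⟩ z ⟨hz0, hz1⟩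
    simp only [max_def]
    split_ifs <;> linarith
  comm := by intro x _ y _; rw [add_comm]
  mono := by
    rintro a _ b _ c _ h
    exact max_le_max le_rfl (by linarith)
  one_mul' := by
    rintro x ⟨hx0, hx1⟩
    rw [show (1:ℝ) + x - 1 = x by ring, max_eq_right hx0]

/-- The product t-norm: ordinary multiplication. -/
def prodT : ContTNorm where
  mul := fun x y => x * y
  maps_to := by
    rintro x ⟨hx0, hx1⟩ y ⟨hy0, hy1⟩
    exact ⟨mul_nonneg hx0 hy0, by nlinarith⟩
  continuousOn := (continuous_fst.mul continuous_snd).continuousOn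
  assoc := fun x _ y _ z _ => mul_assoc x y z
  comm := fun x _ y _ => mul_comm x y
  mono := by rintro a ⟨ha0, _⟩ b _ c _ h; exact mul_le_mul_of_nonneg_left h ha0
  one_mul' := fun x _ => one_mul x

lemma ContTNorm.mul_zero' (t : ContTNorm) {x : ℝ} (hx : x ∈ I01) : t.mul x 0 = 0 := by
  have h01 : (0:ℝ) ∈ I01 := ⟨le_rfl, zero_le_one⟩
  have h11 : (1:ℝ) ∈ I01 := ⟨zero_le_one, le_rfl⟩
  have h1 : t.mul x 0 = t.mul 0 x := t.comm x hx 0 h01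
  have h2 : t.mul 0 x ≤ t.mul 0 1 := t.mono 0 h01 x hx 1 h11 hx.2
  have h3 : t.mul 0 1 = t.mul 1 0 := t.comm 0 h01 1 h11
  have h4 : t.mul 1 0 = 0 := t.one_mul' 0 h01
  have h5 : t.mul x 0 ∈ I01 := t.maps_to x hx 0 h01
  rw [h3, h4] at h2
  rw [h1] at h5 ⊢
  exact le_antisymm h2 h5.1

lemma resid_mem_I01 (t : ContTNorm) {x y : ℝ} (hx : x ∈ I01) (hy : y ∈ I01) :
    resid t x y ∈ I01 := by
  have h01 : (0:ℝ) ∈ I01 := ⟨le_rfl, zero_le_one⟩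
  have h0 : (0:ℝ) ∈ {c | c ∈ I01 ∧ t.mul x c ≤ y} :=
    ⟨h01, by rw [t.mul_zero' hx]; exact hy.1⟩
  have hbdd : BddAbove {c | c ∈ I01 ∧ t.mul x c ≤ y} := ⟨1, fun c hc => hc.1.2⟩
  constructor
  · exact le_csSup hbdd h0
  · exact csSup_le ⟨0, h0⟩ fun c hc => hc.1.2

/-- The full algebra of truth values `[0,1]` for a t-norm `t`. -/
def fullAlg (t : ContTNorm) : TruthAlg t where
  carrier := I01
  subset := le_rfl
  zero_mem := ⟨le_rfl, zero_le_one⟩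
  one_mem := ⟨zero_le_one, le_rfl⟩
  mul_mem := t.maps_to
  resid_mem := fun _ hx _ hy => resid_mem_I01 t hx hy

lemma resid_eq_one_of_le (t : ContTNorm) {x y : ℝ} (hx : x ∈ I01) (hy : y ∈ I01)
    (hxy : x ≤ y) : resid t x y = 1 := by
  have h11 : (1:ℝ) ∈ I01 := ⟨zero_le_one, le_rfl⟩
  have hmul : t.mul x 1 = x := by rw [t.comm x hx 1 h11]; exact t.one_mul' x hx
  have h1 : (1:ℝ) ∈ {c | c ∈ I01 ∧ t.mul x c ≤ y} := ⟨h11, by rw [hmul]; exact hxy⟩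
  have hbdd : BddAbove {c | c ∈ I01 ∧ t.mul x c ≤ y} := ⟨1, fun c hc => hc.1.2⟩
  exact le_antisymm (csSup_le ⟨1, h1⟩ fun c hc => hc.1.2) (le_csSup hbdd h1)

lemma resid_one_zero (t : ContTNorm) : resid t 1 0 = 0 := by
  have : {c | c ∈ I01 ∧ t.mul 1 c ≤ 0} = {0} := by
    ext c
    constructor
    · rintro ⟨hc, hle⟩
      have := t.one_mul' c hc
      have := hc.1
      simp only [Set.mem_singleton_iff]
      linarith [this, (t.one_mul' c hc) ▸ hle]
    · rintro rfl
      exact ⟨⟨le_rfl, zero_le_one⟩, by rw [t.mul_zero' ⟨zero_le_one, le_rfl⟩]⟩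
  rw [resid, this, csSup_singleton]

/-- The two-element algebra of truth values `{0,1}`. -/
def boolAlg (t : ContTNorm) : TruthAlg t where
  carrier := {0, 1}
  subset := by
    rintro x (rfl | rfl)
    · exact ⟨le_rfl, zero_le_one⟩
    · exact ⟨zero_le_one, le_rfl⟩
  zero_mem := Or.inl rfl
  one_mem := Or.inr rfl
  mul_mem := by
    have h01 : (0:ℝ) ∈ I01 := ⟨le_rfl, zero_le_one⟩
    have h11 : (1:ℝ) ∈ I01 := ⟨zero_le_one, le_rfl⟩
    rintro x (rfl | rfl) y (rfl | rfl)
    · exact Or.inl (t.mul_zero' h01)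
    · exact Or.inl (by rw [t.comm 0 h01 1 h11]; exact t.mul_zero' h11)
    · exact Or.inl (t.mul_zero' h11)
    · exact Or.inr (t.one_mul' 1 h11)
  resid_mem := by
    have h01 : (0:ℝ) ∈ I01 := ⟨le_rfl, zero_le_one⟩
    have h11 : (1:ℝ) ∈ I01 := ⟨zero_le_one, le_rfl⟩
    rintro x (rfl | rfl) y (rfl | rfl)
    · exact Or.inr (resid_eq_one_of_le t h01 h01 le_rfl)
    · exact Or.inr (resid_eq_one_of_le t h01 h11 zero_le_one)
    · exact Or.inl (resid_one_zero t)
    · exact Or.inr (resid_eq_one_of_le t h11 h11 le_rfl)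

/-- Classical logic: the logic induced by the two-element algebra `{0,1}`
(this is independent of the chosen continuous t-norm). -/
def ClassicalLogic : Set Formula := Taut minT (boolAlg minT)

/-
Gödel logic proves `X₁ → X₁ & X₁`, so every algebra of truth values inducing an extension of it
consists of idempotents of its t-norm. By continuity (intermediate value theorem) an idempotent
`x` satisfies `x * y = min x y`, so on such an algebra the t-norm is `min` and the residuum is
the Gödel implication. For `0 < a ≤ 1` the map sending `[a, 1]` to `1` and fixing `[0, a)`
preserves `0`, `min` and the Gödel implication, and keeps valuations inside the algebra. If a
valuation gave `α` a value `p` larger than the value of `β`, composing it with this map for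
`a = p` would make `α` true and `β` not.
-/

lemma mem_I01_zero : (0:ℝ) ∈ I01 := ⟨le_rfl, zero_le_one⟩

lemma mem_I01_one : (1:ℝ) ∈ I01 := ⟨zero_le_one, le_rfl⟩

namespace ContTNorm

variable (t : ContTNorm) {x y : ℝ}

lemma mul_one' (hx : x ∈ I01) : t.mul x 1 = x := by
  rw [t.comm x hx 1 mem_I01_one, t.one_mul' x hx]

lemma mul_le_right (hx : x ∈ I01) (hy : y ∈ I01) : t.mul x y ≤ y := by
  calc t.mul x y = t.mul y x := t.comm x hx y hy
    _ ≤ t.mul y 1 := t.mono y hy x hx 1 mem_I01_one hx.2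
    _ = y := t.mul_one' hy

lemma mul_le_left (hx : x ∈ I01) (hy : y ∈ I01) : t.mul x y ≤ x := by
  rw [t.comm x hx y hy]
  exact t.mul_le_right hy hx

lemma mul_eq_one_iff (hx : x ∈ I01) (hy : y ∈ I01) : t.mul x y = 1 ↔ x = 1 ∧ y = 1 := by
  constructor
  · intro h
    exact ⟨le_antisymm hx.2 (h ▸ t.mul_le_left hx hy),
      le_antisymm hy.2 (h ▸ t.mul_le_right hx hy)⟩
  · rintro ⟨rfl, rfl⟩
    exact t.one_mul' 1 mem_I01_one

lemma continuousOn_mul_left (hx : x ∈ I01) : ContinuousOn (t.mul x) I01 :=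
  t.continuousOn.comp (continuous_const.prodMk continuous_id).continuousOn
    fun _ hc => Set.mk_mem_prod hx hc

lemma mul_eq_min_of_mul_self (hx : x ∈ I01) (hidem : t.mul x x = x) (hy : y ∈ I01) :
    t.mul x y = min x y := by
  rcases le_total x y with hxy | hyx
  · refine (min_eq_left hxy).symm ▸ le_antisymm (t.mul_le_left hx hy) ?_
    calc x = t.mul x x := hidem.symm
      _ ≤ t.mul x y := t.mono x hx x hx y hy hxy
  · -- `y = x * z` for some `z`, and then `x * y = (x * x) * z = y`
    have hy' : y ∈ Set.Icc (t.mul x 0) (t.mul x 1) := by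
      rw [t.mul_zero' hx, t.mul_one' hx]
      exact ⟨hy.1, hyx⟩
    obtain ⟨z, hz, rfl⟩ := intermediate_value_Icc zero_le_one (t.continuousOn_mul_left hx) hy'
    rw [min_eq_right hyx, ← t.assoc x hx x hx z hz, hidem]

end ContTNorm

lemma mul_resid_le (t : ContTNorm) {x y : ℝ} (hx : x ∈ I01) (hy : 0 ≤ y) :
    t.mul x (resid t x y) ≤ y := by
  have hclosed : IsClosed {c | c ∈ I01 ∧ t.mul x c ≤ y} :=
    (t.continuousOn_mul_left hx).preimage_isClosed_of_isClosed isClosed_Icc isClosed_Iic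
  have h0 : (0:ℝ) ∈ {c | c ∈ I01 ∧ t.mul x c ≤ y} := ⟨mem_I01_zero, by rwa [t.mul_zero' hx]⟩
  exact (hclosed.csSup_mem ⟨0, h0⟩ ⟨1, fun c hc => hc.1.2⟩).2

lemma resid_eq_one_iff (t : ContTNorm) {x y : ℝ} (hx : x ∈ I01) (hy : y ∈ I01) :
    resid t x y = 1 ↔ x ≤ y := by
  refine ⟨fun h => ?_, resid_eq_one_of_le t hx hy⟩
  simpa only [h, t.mul_one' hx] using mul_resid_le t hx hy.1

def godelImp (x y : ℝ) : ℝ := if x ≤ y then 1 else y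

lemma resid_eq_godelImp_of_mul_self (t : ContTNorm) {x y : ℝ} (hx : x ∈ I01)
    (hidem : t.mul x x = x) (hy : y ∈ I01) : resid t x y = godelImp x y := by
  unfold godelImp
  split_ifs with hxy
  · exact resid_eq_one_of_le t hx hy hxy
  · have hsol : {c | c ∈ I01 ∧ t.mul x c ≤ y} = Set.Icc 0 y := by
      ext c
      refine ⟨fun ⟨hc, hle⟩ => ⟨hc.1, ?_⟩, fun ⟨hc0, hcy⟩ => ⟨⟨hc0, hcy.trans hy.2⟩, ?_⟩⟩
      · rw [t.mul_eq_min_of_mul_self hx hidem hc] at hle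
        exact (min_le_iff.mp hle).resolve_left hxy
      · rw [t.mul_eq_min_of_mul_self hx hidem ⟨hc0, hcy.trans hy.2⟩]
        exact min_le_of_right_le hcy
    rw [resid, hsol, csSup_Icc hy.1]

lemma resid_minT {x y : ℝ} (hx : x ∈ I01) (hy : y ∈ I01) : resid minT x y = godelImp x y :=
  resid_eq_godelImp_of_mul_self minT hx (min_self x) hy

lemma eval_mem (t : ContTNorm) (T : TruthAlg t) {v : ℕ → ℝ} (hv : IsValuation t T v) :
    ∀ γ : Formula, eval t v γ ∈ T.carrier
  | .var i => hv i
  | .bot => T.zero_mem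
  | .conj a b => T.mul_mem _ (eval_mem t T hv a) _ (eval_mem t T hv b)
  | .impl a b => T.resid_mem _ (eval_mem t T hv a) _ (eval_mem t T hv b)

lemma eval_iff_eq_one_iff (t : ContTNorm) (T : TruthAlg t) {v : ℕ → ℝ}
    (hv : IsValuation t T v) (α β : Formula) :
    eval t v (Formula.iff α β) = 1 ↔ eval t v α = eval t v β := by
  have hα := T.subset (eval_mem t T hv α)
  have hβ := T.subset (eval_mem t T hv β)
  simp only [Formula.iff, eval]
  rw [t.mul_eq_one_iff (resid_mem_I01 t hα hβ) (resid_mem_I01 t hβ hα),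
    resid_eq_one_iff t hα hβ, resid_eq_one_iff t hβ hα, le_antisymm_iff]

lemma iff_mem_taut (t : ContTNorm) (T : TruthAlg t) (α β : Formula) :
    Formula.iff α β ∈ Taut t T ↔ ∀ v, IsValuation t T v → eval t v α = eval t v β :=
  forall₂_congr fun _ hv => eval_iff_eq_one_iff t T hv α β

lemma mul_self_of_godel_taut_subset {t : ContTNorm} {T : TruthAlg t}
    (h : Taut minT (fullAlg minT) ⊆ Taut t T) {x : ℝ} (hxT : x ∈ T.carrier) :
    t.mul x x = x := by
  have hx := T.subset hxT
  have hcontr : Formula.impl (.var 0) (.conj (.var 0) (.var 0)) ∈ Taut minT (fullAlg minT) :=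
    fun v hv => resid_eq_one_of_le minT (hv 0) (minT.maps_to _ (hv 0) _ (hv 0)) (min_self _).ge
  have hle : x ≤ t.mul x x :=
    (resid_eq_one_iff t hx (t.maps_to x hx x hx)).mp (h hcontr (fun _ => x) fun _ => hxT)
  exact le_antisymm (t.mul_le_left hx hx) hle

lemma eval_eq_eval_minT {t : ContTNorm} {T : TruthAlg t}
    (hidem : ∀ x ∈ T.carrier, t.mul x x = x) {v : ℕ → ℝ} (hv : IsValuation t T v) :
    ∀ γ : Formula, eval t v γ = eval minT v γ
  | .var _ => rfl
  | .bot => rfl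
  | .conj a b => by
    have ha := eval_mem t T hv a
    rw [eval, eval, t.mul_eq_min_of_mul_self (T.subset ha) (hidem _ ha)
      (T.subset (eval_mem t T hv b)), eval_eq_eval_minT hidem hv a, eval_eq_eval_minT hidem hv b]
    rfl
  | .impl a b => by
    have ha := eval_mem t T hv a
    have hb := eval_mem t T hv b
    have hv' : IsValuation minT (fullAlg minT) v := fun i => T.subset (hv i)
    rw [eval, eval, resid_eq_godelImp_of_mul_self t (T.subset ha) (hidem _ ha) (T.subset hb),
      resid_minT (eval_mem _ _ hv' a) (eval_mem _ _ hv' b),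
      eval_eq_eval_minT hidem hv a, eval_eq_eval_minT hidem hv b]

def godelCut (a x : ℝ) : ℝ := if a ≤ x then 1 else x

section godelCut

variable {a : ℝ}

lemma godelCut_monotone (ha : a ≤ 1) : Monotone (godelCut a) := by
  intro x y hxy
  unfold godelCut
  split_ifs with hx hy hy
  · exact le_rfl
  · exact absurd (hx.trans hxy) hy
  · linarith
  · exact hxy

lemma godelCut_godelImp (ha : a ≤ 1) (x y : ℝ) :
    godelImp (godelCut a x) (godelCut a y) = godelCut a (godelImp x y) := by
  by_cases hxy : x ≤ y
  · rw [godelImp, if_pos (godelCut_monotone ha hxy), godelImp, if_pos hxy, godelCut, if_pos ha]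
  · have hyx : y < x := not_le.mp hxy
    by_cases hay : a ≤ y
    · simp only [godelImp, godelCut, hay, hay.trans hyx.le, hxy, le_refl, if_true, if_false]
    · have hcut_y : godelCut a y = y := if_neg hay
      have hcut : ¬ godelCut a x ≤ y := by
        unfold godelCut; split_ifs <;> linarith
      rw [hcut_y, godelImp, if_neg hcut, godelImp, if_neg hxy, hcut_y]

lemma godelCut_mem {t : ContTNorm} (T : TruthAlg t) {x : ℝ} (hx : x ∈ T.carrier) :
    godelCut a x ∈ T.carrier := by
  unfold godelCut
  split_ifs
  exacts [T.one_mem, hx]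

lemma eval_minT_godelCut (ha0 : 0 < a) (ha1 : a ≤ 1) {v : ℕ → ℝ}
    (hv : IsValuation minT (fullAlg minT) v) :
    ∀ γ : Formula, eval minT (godelCut a ∘ v) γ = godelCut a (eval minT v γ)
  | .var _ => rfl
  | .bot => by simp only [eval, godelCut, not_le.mpr ha0, if_false]
  | .conj b c => by
    simp only [eval, eval_minT_godelCut ha0 ha1 hv b, eval_minT_godelCut ha0 ha1 hv c]
    exact ((godelCut_monotone ha1).map_min).symm
  | .impl b c => by
    have hv' : IsValuation minT (fullAlg minT) (godelCut a ∘ v) := fun i => godelCut_mem _ (hv i)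
    simp only [eval]
    rw [resid_minT (eval_mem _ _ hv' b) (eval_mem _ _ hv' c), eval_minT_godelCut ha0 ha1 hv b,
      eval_minT_godelCut ha0 ha1 hv c, godelCut_godelImp ha1,
      resid_minT (eval_mem _ _ hv b) (eval_mem _ _ hv c)]

end godelCut

lemma eval_le_of_eval_eq_one_imp {t : ContTNorm} {T : TruthAlg t}
    (hidem : ∀ x ∈ T.carrier, t.mul x x = x) {α β : Formula}
    (himp : ∀ w, IsValuation t T w → eval t w α = 1 → eval t w β = 1)
    {v : ℕ → ℝ} (hv : IsValuation t T v) : eval t v α ≤ eval t v β := by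
  by_contra! hlt
  set p := eval t v α
  have hp := T.subset (eval_mem t T hv α)
  have hp0 : 0 < p := (T.subset (eval_mem t T hv β)).1.trans_lt hlt
  have hvI : IsValuation minT (fullAlg minT) v := fun i => T.subset (hv i)
  have hw : IsValuation t T (godelCut p ∘ v) := fun i => godelCut_mem T (hv i)
  have hcut : ∀ γ, eval t (godelCut p ∘ v) γ = godelCut p (eval t v γ) := fun γ => by
    rw [eval_eq_eval_minT hidem hw, eval_eq_eval_minT hidem hv,
      eval_minT_godelCut hp0 hp.2 hvI]
  have hβ := himp _ hw (by rw [hcut, godelCut, if_pos le_rfl])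
  rw [hcut, godelCut, if_neg (not_le.mpr hlt)] at hβ
  linarith [hp.2]

/-- Any real-valued logic extending Gödel logic satisfies P1. -/
theorem extends_Godel_implies_P1 (t : ContTNorm) (T : TruthAlg t)
    (h : Taut minT (fullAlg minT) ⊆ Taut t T) : P1 (Taut t T) := by
  intro t' T' hL α β
  have hidem : ∀ x ∈ T'.carrier, t'.mul x x = x :=
    fun _ hx => mul_self_of_godel_taut_subset (hL ▸ h) hx
  rw [← hL, iff_mem_taut]
  refine ⟨fun heq v hv => by rw [heq v hv], fun hiff v hv => le_antisymm ?_ ?_⟩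
  · exact eval_le_of_eval_eq_one_imp hidem (fun w hw => (hiff w hw).mp) hv
  · exact eval_le_of_eval_eq_one_imp hidem (fun w hw => (hiff w hw).mpr) hv

end
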